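/- Let n ∈ ℤ, let G be a nontrivial additive subgroup of ℂ, and let φ be a ½-derivation of the not-finitely graded Witt algebra W_n(G). Then there exists a finitely supported function a : G × ℤ → ℂ such that φ(L_{α,i}) = Σ_{(d,m) ∈ G×ℤ} a(d,m)·L_{α+d, i+m} for all α ∈ G and i ∈ ℤ. -/

import Mathlib

/-- Underlying vector space of the not-finitely graded Witt algebra W_n(G):
the free ℂ-module on the basis {L_{α,i} : α ∈ G, i ∈ ℤ}. -/
abbrev WnG (G : AddSubgroup ℂ) : Type := (↥G × ℤ) →₀ ℂ

/-- The basis element L_{α,i} of W_n(G). -/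
noncomputable def Lw (G : AddSubgroup ℂ) (α : ↥G) (i : ℤ) : WnG G :=
  Finsupp.single (α, i) 1

/-- The Lie bracket of W_n(G) on basis elements:
[L_{α,i}, L_{β,j}] = (β−α)·L_{α+β,i+j} + (j−i)·L_{α+β,i+j+n}. -/
noncomputable def wBracketBasis (n : ℤ) (G : AddSubgroup ℂ) (p q : ↥G × ℤ) : WnG G :=
  ((q.1 : ℂ) - (p.1 : ℂ)) • Lw G (p.1 + q.1) (p.2 + q.2) +
    ((q.2 : ℂ) - (p.2 : ℂ)) • Lw G (p.1 + q.1) (p.2 + q.2 + n)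

/-- The Lie bracket of W_n(G), extended bilinearly from the basis. -/
noncomputable def wBracket (n : ℤ) (G : AddSubgroup ℂ) :
    WnG G →ₗ[ℂ] WnG G →ₗ[ℂ] WnG G :=
  Finsupp.lift (WnG G →ₗ[ℂ] WnG G) ℂ (↥G × ℤ) fun p =>
    Finsupp.lift (WnG G) ℂ (↥G × ℤ) fun q => wBracketBasis n G p q

/-- `φ` is a ½-derivation of W_n(G). -/
def IsHalfDerivationW (n : ℤ) (G : AddSubgroup ℂ) (φ : WnG G →ₗ[ℂ] WnG G) : Prop :=
  ∀ x y : WnG G, φ (wBracket n G x y) =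
    (1 / 2 : ℂ) • (wBracket n G (φ x) y + wBracket n G x (φ y))

namespace Stmt9

variable {n : ℤ} {G : AddSubgroup ℂ}

lemma lw_apply (α : ↥G) (i : ℤ) (q : ↥G × ℤ) :
    Lw G α i q = if (α, i) = q then 1 else 0 := by
  simp [Lw, Finsupp.single_apply]

lemma wBB_apply (p : ↥G × ℤ) (β γ : ↥G) (j k : ℤ) :
    wBracketBasis n G p (β, j) (γ, k)
      = (if p = (γ - β, k - j) then (β:ℂ) - (p.1:ℂ) else 0)
        + (if p = (γ - β, k - j - n) then (j:ℂ) - (p.2:ℂ) else 0) := by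
  rcases p with ⟨μ, pi⟩
  have h1 : ((μ + β, pi + j) = ((γ, k) : ↥G × ℤ)) ↔ ((μ, pi) = (γ - β, k - j)) := by
    simp [Prod.ext_iff, eq_sub_iff_add_eq]
  have h2 : ((μ + β, pi + j + n) = ((γ, k) : ↥G × ℤ)) ↔ ((μ, pi) = (γ - β, k - j - n)) := by
    rw [Prod.ext_iff, Prod.ext_iff]
    constructor
    · rintro ⟨ha, hb⟩; exact ⟨eq_sub_iff_add_eq.mpr ha, by simp only at hb ⊢; omega⟩
    · rintro ⟨ha, hb⟩; exact ⟨eq_sub_iff_add_eq.mp ha, by simp only at hb ⊢; omega⟩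
  simp only [wBracketBasis, Finsupp.add_apply, Finsupp.smul_apply, lw_apply, smul_eq_mul]
  rw [if_congr h1 rfl rfl, if_congr h2 rfl rfl]
  simp [mul_ite]

lemma wBracket_single_right (x : WnG G) (β : ↥G) (j : ℤ) :
    wBracket n G x (Lw G β j) = x.sum fun p c => c • wBracketBasis n G p (β, j) := by
  induction x using Finsupp.induction_linear with
  | zero => simp
  | add a b ha hb =>
      rw [map_add, LinearMap.add_apply, ha, hb]
      rw [Finsupp.sum_add_index' (by intro p; simp) (by intro p c1 c2; rw [add_smul])]
  | single p c =>
      rw [Finsupp.sum_single_index (by simp)]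
      rw [wBracket, Finsupp.lift_apply, Finsupp.sum_single_index (by simp)]
      rw [LinearMap.smul_apply, Finsupp.lift_apply, Lw,
        Finsupp.sum_single_index (by simp), one_smul]

lemma wBracket_apply_right (x : WnG G) (β : ↥G) (j : ℤ) (γ : ↥G) (k : ℤ) :
    wBracket n G x (Lw G β j) (γ, k)
      = (2*(β:ℂ) - γ) * x (γ - β, k - j) + (2*(j:ℂ) - k + n) * x (γ - β, k - j - n) := by
  rw [wBracket_single_right, Finsupp.sum_apply, Finsupp.sum]
  simp only [Finsupp.smul_apply, wBB_apply, smul_eq_mul, mul_add, mul_ite, mul_zero]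
  rw [Finset.sum_add_distrib, Finset.sum_ite_eq' , Finset.sum_ite_eq']
  have e1 : ∀ pp : ↥G × ℤ, pp ∉ x.support → x pp = 0 := by
    intro pp h; exact Finsupp.notMem_support_iff.mp h
  split_ifs with hA hB hB
  · push_cast; ring
  · rw [e1 _ hB]; push_cast; ring
  · rw [e1 _ hA]; push_cast; ring
  · rw [e1 _ hA, e1 _ hB]; ring

lemma wBB_apply' (q : ↥G × ℤ) (α γ : ↥G) (i k : ℤ) :
    wBracketBasis n G (α, i) q (γ, k)
      = (if q = (γ - α, k - i) then (q.1:ℂ) - (α:ℂ) else 0)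
        + (if q = (γ - α, k - i - n) then (q.2:ℂ) - (i:ℂ) else 0) := by
  rcases q with ⟨ν, qi⟩
  have h1 : ((α + ν, i + qi) = ((γ, k) : ↥G × ℤ)) ↔ ((ν, qi) = (γ - α, k - i)) := by
    rw [Prod.ext_iff, Prod.ext_iff]
    constructor
    · rintro ⟨ha, hb⟩
      exact ⟨eq_sub_iff_add_eq.mpr (by rw [add_comm] at ha; exact ha),
        by simp only at hb ⊢; omega⟩
    · rintro ⟨ha, hb⟩
      refine ⟨by rw [add_comm]; exact eq_sub_iff_add_eq.mp ha, by simp only at hb ⊢; omega⟩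
  have h2 : ((α + ν, i + qi + n) = ((γ, k) : ↥G × ℤ)) ↔ ((ν, qi) = (γ - α, k - i - n)) := by
    rw [Prod.ext_iff, Prod.ext_iff]
    constructor
    · rintro ⟨ha, hb⟩
      exact ⟨eq_sub_iff_add_eq.mpr (by rw [add_comm] at ha; exact ha),
        by simp only at hb ⊢; omega⟩
    · rintro ⟨ha, hb⟩
      refine ⟨by rw [add_comm]; exact eq_sub_iff_add_eq.mp ha, by simp only at hb ⊢; omega⟩
  simp only [wBracketBasis, Finsupp.add_apply, Finsupp.smul_apply, lw_apply, smul_eq_mul]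
  rw [if_congr h1 rfl rfl, if_congr h2 rfl rfl]
  simp [mul_ite]

lemma wBracket_single_left (y : WnG G) (α : ↥G) (i : ℤ) :
    wBracket n G (Lw G α i) y = y.sum fun q e => e • wBracketBasis n G (α, i) q := by
  rw [wBracket, Finsupp.lift_apply, Lw, Finsupp.sum_single_index (by simp), one_smul,
    Finsupp.lift_apply]

lemma wBracket_apply_left (y : WnG G) (α : ↥G) (i : ℤ) (γ : ↥G) (k : ℤ) :
    wBracket n G (Lw G α i) y (γ, k)
      = ((γ:ℂ) - 2*(α:ℂ)) * y (γ - α, k - i) + ((k:ℂ) - 2*(i:ℂ) - n) * y (γ - α, k - i - n) := by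
  rw [wBracket_single_left, Finsupp.sum_apply, Finsupp.sum]
  simp only [Finsupp.smul_apply, wBB_apply', smul_eq_mul, mul_add, mul_ite, mul_zero]
  rw [Finset.sum_add_distrib, Finset.sum_ite_eq' , Finset.sum_ite_eq']
  have e1 : ∀ pp : ↥G × ℤ, pp ∉ y.support → y pp = 0 := by
    intro pp h; exact Finsupp.notMem_support_iff.mp h
  split_ifs with hA hB hB
  · push_cast; ring
  · rw [e1 _ hB]; push_cast; ring
  · rw [e1 _ hA]; push_cast; ring
  · rw [e1 _ hA, e1 _ hB]; ring

lemma wBracket_lw_lw (α β : ↥G) (i j : ℤ) :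
    wBracket n G (Lw G α i) (Lw G β j)
      = ((β:ℂ) - (α:ℂ)) • Lw G (α + β) (i + j) + ((j:ℂ) - (i:ℂ)) • Lw G (α + β) (i + j + n) := by
  rw [wBracket_single_right, Lw, Finsupp.sum_single_index (by simp), one_smul]
  rfl

variable (φ : WnG G →ₗ[ℂ] WnG G)

/-- Shifted coefficients of `φ` on basis vectors. -/
noncomputable def Hf (α : ↥G) (i : ℤ) (d : ↥G) (m : ℤ) : ℂ :=
  φ (Lw G α i) (α + d, i + m)

lemma master (hφ : IsHalfDerivationW n G φ) (α β d : ↥G) (i j m : ℤ) :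
    2*((β:ℂ) - α) * Hf φ (α+β) (i+j) d m + 2*((j:ℂ) - i) * Hf φ (α+β) (i+j+n) d (m-n)
    = ((β:ℂ) - α - d) * Hf φ α i d m + ((j:ℂ) - i + n - m) * Hf φ α i d (m-n)
      + ((β:ℂ) - α + d) * Hf φ β j d m + ((j:ℂ) - i + m - n) * Hf φ β j d (m-n) := by
  have h := hφ (Lw G α i) (Lw G β j)
  rw [wBracket_lw_lw, map_add, map_smul, map_smul] at h
  have hpt := DFunLike.congr_fun h ((α + β + d, i + j + m) : ↥G × ℤ)
  simp only [Finsupp.add_apply, Finsupp.smul_apply, smul_eq_mul] at hpt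
  rw [wBracket_apply_right, wBracket_apply_left] at hpt
  have g1 : α + β + d - β = α + d := by abel
  have g2 : i + j + m - j = i + m := by ring
  have g4 : α + β + d - α = β + d := by abel
  have g5 : i + j + m - i = j + m := by ring
  rw [g1, g2, g4, g5] at hpt
  have g3 : i + m - n = i + (m - n) := by ring
  have g6 : j + m - n = j + (m - n) := by ring
  rw [g3, g6] at hpt
  have e2 : i + j + n + (m - n) = i + j + m := by ring
  simp only [Hf, e2]
  push_cast at hpt ⊢
  linear_combination (2:ℂ) * hpt

lemma exists_good (hG : G ≠ ⊥) (t : ℂ) :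
    ∃ ε : ↥G, (ε:ℂ) ≠ 0 ∧ (ε:ℂ) ≠ t ∧ 2*(ε:ℂ) ≠ t := by
  obtain ⟨ε₀, hε₀⟩ := AddSubgroup.ne_bot_iff_exists_ne_zero.mp hG
  have he : (ε₀:ℂ) ≠ 0 := by
    intro h; exact hε₀ (Subtype.ext h)
  by_cases h1 : (ε₀:ℂ) ≠ t ∧ 2*(ε₀:ℂ) ≠ t
  · exact ⟨ε₀, he, h1.1, h1.2⟩
  push_neg at h1
  by_cases h2 : (ε₀:ℂ) = t
  · refine ⟨ε₀ + ε₀, ?_, ?_, ?_⟩ <;> push_cast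
    · intro h; apply he; linear_combination h / 2
    · rw [← h2]; intro h; apply he; linear_combination h
    · rw [← h2]; intro h; apply he; linear_combination h / 3
  · have h3 : 2*(ε₀:ℂ) = t := h1 h2
    refine ⟨ε₀ + ε₀ + ε₀, ?_, ?_, ?_⟩ <;> push_cast
    · intro h; apply he; linear_combination h / 3
    · rw [← h3]; intro h; apply he; linear_combination h
    · rw [← h3]; intro h; apply he; linear_combination h / 4

lemma chain_zero (hn : n ≠ 0) (P : ℤ → ℂ) (c : ℂ) (hc : c ≠ 0)
    (hfin : (Function.support P).Finite)
    (hrec : ∀ m : ℤ, c * P m = ((m:ℂ) - n) * P (m - n)) : ∀ m, P m = 0 := by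
  by_contra hcon
  push_neg at hcon
  obtain ⟨m₁, hm₁⟩ := hcon
  have hne : hfin.toFinset.Nonempty := ⟨m₁, by simp [Set.Finite.mem_toFinset, Function.mem_support, hm₁]⟩
  have main : ∀ m₀ : ℤ, P m₀ ≠ 0 → P (m₀ - n) = 0 → False := by
    intro m₀ h₀ hout
    have h := hrec m₀
    rw [hout, mul_zero] at h
    rcases mul_eq_zero.mp h with h | h
    · exact hc h
    · exact h₀ h
  rcases lt_or_gt_of_ne hn with hneg | hpos
  · set m₀ := hfin.toFinset.max' hne with hm₀def
    have hm₀ : P m₀ ≠ 0 := by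
      have := hfin.toFinset.max'_mem hne
      rw [Set.Finite.mem_toFinset, Function.mem_support] at this
      exact this
    refine main m₀ hm₀ ?_
    by_contra hne2
    have hmem : m₀ - n ∈ hfin.toFinset := by
      rw [Set.Finite.mem_toFinset, Function.mem_support]; exact hne2
    have := hfin.toFinset.le_max' _ hmem
    omega
  · set m₀ := hfin.toFinset.min' hne with hm₀def
    have hm₀ : P m₀ ≠ 0 := by
      have := hfin.toFinset.min'_mem hne
      rw [Set.Finite.mem_toFinset, Function.mem_support] at this
      exact this
    refine main m₀ hm₀ ?_
    by_contra hne2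
    have hmem : m₀ - n ∈ hfin.toFinset := by
      rw [Set.Finite.mem_toFinset, Function.mem_support]; exact hne2
    have := hfin.toFinset.min'_le _ hmem
    omega

lemma step1_chain (hφ : IsHalfDerivationW n G φ) (β d : ↥G) (m : ℤ) :
    ((β:ℂ) - d) * (Hf φ β 0 d m - Hf φ 0 0 d m)
      = ((m:ℂ) - n) * (Hf φ β 0 d (m-n) - Hf φ 0 0 d (m-n)) := by
  have h := master φ hφ 0 β d 0 0 m
  simp only [zero_add, add_zero] at h
  push_cast at h ⊢
  linear_combination h

lemma Pfin (β d : ↥G) :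
    (Function.support fun m => Hf φ β 0 d m - Hf φ 0 0 d m).Finite := by
  apply Set.Finite.subset (Set.Finite.image (fun p : ↥G × ℤ => p.2)
    (Set.Finite.union (φ (Lw G β 0)).finite_support (φ (Lw G 0 0)).finite_support))
  intro m hm
  rw [Function.mem_support] at hm
  by_cases h1 : Hf φ β 0 d m = 0
  · have h2 : Hf φ 0 0 d m ≠ 0 := by
      intro h; apply hm; rw [h1, h]; ring
    exact ⟨(0 + d, 0 + m), Or.inr (by rw [Function.mem_support]; exact h2), zero_add m⟩
  · exact ⟨(β + d, 0 + m), Or.inl (by rw [Function.mem_support]; exact h1), zero_add m⟩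

lemma step1_off (hφ : IsHalfDerivationW n G φ) (hn : n ≠ 0) (β d : ↥G)
    (hbd : (β:ℂ) ≠ (d:ℂ)) : ∀ m, Hf φ β 0 d m = Hf φ 0 0 d m := by
  intro m
  have := chain_zero hn (fun m => Hf φ β 0 d m - Hf φ 0 0 d m)
    ((β:ℂ) - d) (sub_ne_zero.mpr hbd) (Pfin φ β d) (fun m => step1_chain φ hφ β d m) m
  exact sub_eq_zero.mp this

lemma step1 (hφ : IsHalfDerivationW n G φ) (hG : G ≠ ⊥) (hn : n ≠ 0) :
    ∀ β d m, Hf φ β 0 d m = Hf φ 0 0 d m := by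
  intro β d m
  by_cases hbd : (β:ℂ) = (d:ℂ)
  · -- β = d as subgroup elements
    have hβd : β = d := Subtype.ext hbd
    subst hβd
    by_cases hm : m = 0
    · subst hm
      obtain ⟨ε, he0, he1, he2⟩ := exists_good hG (β:ℂ)
      have h := master φ hφ ε (β - ε) β 0 0 0
      have g : ε + (β - ε) = β := by abel
      rw [g] at h
      simp only [zero_add, add_zero, zero_sub] at h
      have e1 : ∀ m', Hf φ ε 0 β m' = Hf φ 0 0 β m' :=
        step1_off φ hφ hn ε β he1
      have e2 : ∀ m', Hf φ (β - ε) 0 β m' = Hf φ 0 0 β m' := by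
        apply step1_off φ hφ hn
        push_cast
        intro hh; apply he0; linear_combination -hh
      rw [e1, e1, e2, e2] at h
      have key : 2*((β:ℂ) - 2*ε) * (Hf φ β 0 β 0 - Hf φ 0 0 β 0) = 0 := by
        push_cast at h ⊢
        linear_combination h
      have h2 : ((β:ℂ) - 2*ε) ≠ 0 := by intro hh; apply he2; linear_combination -hh
      rcases mul_eq_zero.mp key with h' | h'
      · exfalso
        rcases mul_eq_zero.mp h' with h'' | h''
        · norm_num at h''
        · exact h2 h''
      · exact sub_eq_zero.mp h'
    · -- m ≠ 0 : use chain at m + n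
      have h := step1_chain φ hφ β β (m + n)
      simp only [sub_self, zero_mul, add_sub_cancel_right] at h
      have hc : ((m + n : ℤ):ℂ) - (n:ℂ) ≠ 0 := by
        push_cast
        intro hh
        apply hm
        exact Int.cast_injective (by push_cast; linear_combination hh : ((m:ℤ):ℂ) = ((0:ℤ):ℂ))
      rcases mul_eq_zero.mp h.symm with h' | h'
      · exact absurd (by push_cast at h' ⊢; linear_combination h' : ((m + n : ℤ):ℂ) - (n:ℂ) = 0) hc
      · exact sub_eq_zero.mp h'
  · exact step1_off φ hφ hn β d hbd m

lemma Cp (hφ : IsHalfDerivationW n G φ) (hG : G ≠ ⊥) (hn : n ≠ 0) (α β d : ↥G) (j m : ℤ) :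
    2*((β:ℂ) - α) * (Hf φ (α+β) j d m - Hf φ 0 0 d m)
      + 2*(j:ℂ) * (Hf φ (α+β) (j+n) d (m-n) - Hf φ 0 0 d (m-n))
    = ((β:ℂ) - α + d) * (Hf φ β j d m - Hf φ 0 0 d m)
      + ((j:ℂ) + m - n) * (Hf φ β j d (m-n) - Hf φ 0 0 d (m-n)) := by
  have h := master φ hφ α β d 0 j m
  simp only [zero_add] at h
  rw [step1 φ hφ hG hn α d m, step1 φ hφ hG hn α d (m-n)] at h
  push_cast at h ⊢
  linear_combination h

lemma step2a (hφ : IsHalfDerivationW n G φ) (hG : G ≠ ⊥) (hn : n ≠ 0)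
    (β β' d : ↥G) (j m : ℤ) : Hf φ β j d m = Hf φ β' j d m := by
  by_cases hbb : β = β'
  · rw [hbb]
  have h1 := Cp φ hφ hG hn 0 β d j m
  have h2 := Cp φ hφ hG hn (β - β') β' d j m
  have h3 := Cp φ hφ hG hn (β' - β) β d j m
  have h4 := Cp φ hφ hG hn 0 β' d j m
  rw [zero_add] at h1 h4
  have g2 : β - β' + β' = β := by abel
  have g3 : β' - β + β = β' := by abel
  rw [g2] at h2
  rw [g3] at h3
  have hne : (β:ℂ) - β' ≠ 0 := sub_ne_zero.mpr (fun hh => hbb (Subtype.ext hh))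
  push_cast at h1 h2 h3 h4
  have key : (5:ℂ) * ((β:ℂ) - β') * (Hf φ β j d m - Hf φ β' j d m) = 0 := by
    linear_combination h1 - h2 - h3 + h4
  rcases mul_eq_zero.mp key with h' | h'
  · exfalso
    rcases mul_eq_zero.mp h' with h'' | h''
    · norm_num at h''
    · exact hne h''
  · exact sub_eq_zero.mp h'

lemma key_ne (hφ : IsHalfDerivationW n G φ) (hG : G ≠ ⊥) (hn : n ≠ 0) :
    ∀ β j d m, Hf φ β j d m = Hf φ 0 0 d m := by
  intro β j d m
  obtain ⟨ε, he0, -, -⟩ := exists_good hG 0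
  have h1 := Cp φ hφ hG hn β β d j m
  have h2 := Cp φ hφ hG hn (β - ε) β d j m
  have g2 : β - ε + β = β + β - ε := by abel
  rw [g2] at h2
  -- replace all first arguments by β using step2a
  rw [step2a φ hφ hG hn (β + β) β d j m, step2a φ hφ hG hn (β + β) β d (j+n) (m-n),
    step2a φ hφ hG hn (β + β - ε) β d j m,
    step2a φ hφ hG hn (β + β - ε) β d (j+n) (m-n)] at *
  push_cast at h1 h2
  have key : (ε:ℂ) * (Hf φ β j d m - Hf φ 0 0 d m) = 0 := by
    linear_combination h2 - h1
  rcases mul_eq_zero.mp key with h' | h'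
  · exact absurd h' he0
  · exact sub_eq_zero.mp h'

lemma keyeq_i (hφ : IsHalfDerivationW n G φ) (h0 : n = 0) (α : ↥G) (i : ℤ) (d : ↥G) (m : ℤ) :
    ((d:ℂ) + m - α - i) * (Hf φ α i d m - Hf φ 0 0 d m) = 0 := by
  have h := master φ hφ α 0 d i 0 m
  subst h0
  simp only [add_zero, zero_add, sub_zero] at h
  push_cast at h ⊢
  linear_combination h

lemma key_eq (hφ : IsHalfDerivationW n G φ) (hG : G ≠ ⊥) (h0 : n = 0) :
    ∀ α i d m, Hf φ α i d m = Hf φ 0 0 d m := by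
  intro α i d m
  by_cases hd : (d:ℂ) + m - α - i = 0
  · subst h0
    obtain ⟨ε, he0, he1, he2⟩ := exists_good hG ((d:ℂ) + m)
    have h := master φ hφ ε (α - ε) d 0 i m
    have g : ε + (α - ε) = α := by abel
    rw [g] at h
    simp only [zero_add, add_zero, sub_zero] at h
    have e1 : Hf φ ε 0 d m = Hf φ 0 0 d m := by
      have k := keyeq_i φ hφ rfl ε 0 d m
      push_cast at k
      rcases mul_eq_zero.mp k with h' | h'
      · exfalso; apply he1; linear_combination -h'
      · exact sub_eq_zero.mp h'
    have e2 : Hf φ (α - ε) i d m = Hf φ 0 0 d m := by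
      have k := keyeq_i φ hφ rfl (α - ε) i d m
      push_cast at k
      rcases mul_eq_zero.mp k with h' | h'
      · exfalso; apply he0; linear_combination h' - hd
      · exact sub_eq_zero.mp h'
    rw [e1, e2] at h
    have key : 2*((d:ℂ) + m - 2*ε) * (Hf φ α i d m - Hf φ 0 0 d m) = 0 := by
      push_cast at h ⊢
      linear_combination h + 2*(Hf φ α i d m - Hf φ 0 0 d m)*hd
    have hf : ((d:ℂ) + m - 2*ε) ≠ 0 := by
      intro hh; apply he2; linear_combination -hh
    rcases mul_eq_zero.mp key with h' | h'
    · exfalso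
      rcases mul_eq_zero.mp h' with h'' | h''
      · norm_num at h''
      · exact hf h''
    · exact sub_eq_zero.mp h'
  · have := keyeq_i φ hφ h0 α i d m
    rcases mul_eq_zero.mp this with h' | h'
    · exact absurd h' hd
    · exact sub_eq_zero.mp h'

end Stmt9

/-- every ½-derivation of W_n(G) is given by a finitely supported
function a : G × ℤ → ℂ via φ(L_{α,i}) = Σ a(d,m)·L_{α+d,i+m}. -/
theorem stmt9 (n : ℤ) (G : AddSubgroup ℂ) (hG : G ≠ ⊥)
    (φ : WnG G →ₗ[ℂ] WnG G) (hφ : IsHalfDerivationW n G φ) :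
    ∃ a : (↥G × ℤ) →₀ ℂ, ∀ (α : ↥G) (i : ℤ),
      φ (Lw G α i) = a.sum fun p c => c • Lw G (α + p.1) (i + p.2) := by

  refine ⟨φ (Lw G 0 0), ?_⟩
  intro α i
  have key : ∀ β j d m, Stmt9.Hf φ β j d m = Stmt9.Hf φ 0 0 d m := by
    by_cases h0 : n = 0
    · exact Stmt9.key_eq φ hφ hG h0
    · exact Stmt9.key_ne φ hφ hG h0
  ext q
  obtain ⟨γ, k⟩ := q
  rw [Finsupp.sum_apply]
  have hL : φ (Lw G α i) (γ, k) = φ (Lw G 0 0) (γ - α, k - i) := by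
    have h1 : ((γ, k) : ↥G × ℤ) = (α + (γ - α), i + (k - i)) := by
      rw [Prod.mk.injEq]
      constructor
      · abel
      · ring
    rw [h1]
    have h2 := key α i (γ - α) (k - i)
    simp only [Stmt9.Hf] at h2
    rw [h2, zero_add, zero_add]
  rw [hL]
  have hterm : ∀ p : ↥G × ℤ, ∀ c : ℂ,
      (c • Lw G (α + p.1) (i + p.2)) (γ, k) = if p = (γ - α, k - i) then c else 0 := by
    rintro ⟨pd, pm⟩ c
    rw [Finsupp.smul_apply, Stmt9.lw_apply, smul_eq_mul, mul_ite, mul_one, mul_zero]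
    have hiff : ((α + pd, i + pm) = ((γ, k) : ↥G × ℤ)) ↔ (((pd, pm) : ↥G × ℤ) = (γ - α, k - i)) := by
      rw [Prod.ext_iff, Prod.ext_iff]
      constructor
      · rintro ⟨ha, hb⟩
        exact ⟨eq_sub_iff_add_eq.mpr (by rw [add_comm] at ha; exact ha),
          by simp only at hb ⊢; omega⟩
      · rintro ⟨ha, hb⟩
        refine ⟨by rw [add_comm]; exact eq_sub_iff_add_eq.mp ha, by simp only at hb ⊢; omega⟩
    rw [if_congr hiff rfl rfl]
  rw [Finsupp.sum_congr (g2 := fun p c => if p = (γ - α, k - i) then c else 0)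
    (fun p _ => hterm p _)]
  rw [Finsupp.sum_ite_self_eq']
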